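/- Let Γ₁ and Γ₂ be greedoids with disjoint ground sets. Then the full rank attachment Γ₁ ≈ Γ₂ is a greedoid. -/
import Mathlib


/-- A greedoid on a finite ground set `E`, given by its collection of feasible sets. -/
structure Greedoid (E : Type*) [DecidableEq E] [Fintype E] where
  /-- The collection of feasible sets. -/
  feasible : Finset (Finset E)
  /-- The empty set is feasible. -/
  empty_mem : ∅ ∈ feasible
  /-- The exchange axiom (G2). -/
  exchange : ∀ F₁ ∈ feasible, ∀ F₂ ∈ feasible, F₂.card < F₁.card →
      ∃ x ∈ F₁ \ F₂, insert x F₂ ∈ feasible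

namespace Greedoid

variable {E : Type*} [DecidableEq E] [Fintype E]

/-- The rank of a set `A`: the maximum size of a feasible subset of `A`. -/
def rank (Γ : Greedoid E) (A : Finset E) : ℕ :=
  (Γ.feasible.filter (fun B => B ⊆ A)).sup Finset.card

/-- The Tutte polynomial of a greedoid, evaluated at `(x, y) ∈ ℚ²`. -/
noncomputable def tutte (Γ : Greedoid E) (x y : ℚ) : ℚ :=
  ∑ A : Finset E,
    (x - 1) ^ (Γ.rank Finset.univ - Γ.rank A) * (y - 1) ^ (A.card - Γ.rank A)

/-- An element is a loop if it belongs to no feasible set. -/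
def IsLoop (Γ : Greedoid E) (e : E) : Prop := ∀ F ∈ Γ.feasible, e ∉ F

/-- Two elements are parallel if `ρ(A ∪ e) = ρ(A ∪ f) = ρ(A ∪ e ∪ f)` for all `A`. -/
def Parallel (Γ : Greedoid E) (e f : E) : Prop :=
  ∀ A : Finset E,
    Γ.rank (insert e A) = Γ.rank (insert f A) ∧
    Γ.rank (insert e A) = Γ.rank (insert e (insert f A))

/-- The closure of a set `A`: all elements whose addition does not increase the rank. -/
def closure (Γ : Greedoid E) (A : Finset E) : Finset E :=
  Finset.univ.filter (fun e => Γ.rank (insert e A) = Γ.rank A)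

end Greedoid


/-- The part of a subset of `E₁ ⊕ E₂` lying in `E₁`. -/
def sumPartL {E₁ E₂ : Type*} [DecidableEq E₁] [Fintype E₁] [DecidableEq E₂]
    (F : Finset (E₁ ⊕ E₂)) : Finset E₁ :=
  Finset.univ.filter (fun e => Sum.inl e ∈ F)

/-- The part of a subset of `E₁ ⊕ E₂` lying in `E₂`. -/
def sumPartR {E₁ E₂ : Type*} [DecidableEq E₁] [DecidableEq E₂] [Fintype E₂]
    (F : Finset (E₁ ⊕ E₂)) : Finset E₂ :=
  Finset.univ.filter (fun e => Sum.inr e ∈ F)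

/-- Feasibility in the full rank attachment `Γ₁ ≈ Γ₂`: either `F` is (a copy of) a
feasible set of `Γ₁`, or the `E₁`-part of `F` is feasible of full rank in `Γ₁` and the
`E₂`-part of `F` is feasible in `Γ₂`. -/
def FullRankFeasible {E₁ E₂ : Type*} [DecidableEq E₁] [Fintype E₁] [DecidableEq E₂] [Fintype E₂]
    (Γ₁ : Greedoid E₁) (Γ₂ : Greedoid E₂) (F : Finset (E₁ ⊕ E₂)) : Prop :=
  (sumPartL F ∈ Γ₁.feasible ∧ sumPartR F = ∅) ∨
  (sumPartL F ∈ Γ₁.feasible ∧ Γ₁.rank (sumPartL F) = Γ₁.rank Finset.univ ∧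
    sumPartR F ∈ Γ₂.feasible)


section Aux
variable {E : Type*} [DecidableEq E] [Fintype E]

lemma Greedoid.rank_feasible (Γ : Greedoid E) {F : Finset E} (hF : F ∈ Γ.feasible) :
    Γ.rank F = F.card := by
  apply le_antisymm
  · exact Finset.sup_le fun B hB => Finset.card_le_card (Finset.mem_filter.mp hB).2
  · exact Finset.le_sup (f := Finset.card) (Finset.mem_filter.mpr ⟨hF, le_refl F⟩)

lemma Greedoid.card_le_rank_univ (Γ : Greedoid E) {F : Finset E} (hF : F ∈ Γ.feasible) :
    F.card ≤ Γ.rank Finset.univ :=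
  Finset.le_sup (f := Finset.card) (Finset.mem_filter.mpr ⟨hF, Finset.subset_univ F⟩)

end Aux

section Sum
variable {E₁ E₂ : Type*} [DecidableEq E₁] [Fintype E₁] [DecidableEq E₂] [Fintype E₂]

lemma sumPartL_eq (F : Finset (E₁ ⊕ E₂)) : sumPartL F = F.toLeft := by
  ext x; simp [sumPartL]

lemma sumPartR_eq (F : Finset (E₁ ⊕ E₂)) : sumPartR F = F.toRight := by
  ext x; simp [sumPartR]

lemma card_eq (F : Finset (E₁ ⊕ E₂)) : F.card = (sumPartL F).card + (sumPartR F).card := by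
  rw [sumPartL_eq, sumPartR_eq, Finset.card_toLeft_add_card_toRight]

end Sum


set_option linter.unusedSectionVars false

/-- The full rank attachment `Γ₁ ≈ Γ₂` of greedoids `Γ₁`, `Γ₂` with
disjoint ground sets is a greedoid: the empty set is feasible and the exchange axiom
holds. -/
theorem fullRankAttachment_is_greedoid
    {E₁ E₂ : Type*} [DecidableEq E₁] [Fintype E₁] [DecidableEq E₂] [Fintype E₂]
    (Γ₁ : Greedoid E₁) (Γ₂ : Greedoid E₂) :
    FullRankFeasible Γ₁ Γ₂ ∅ ∧
    (∀ F₁ F₂ : Finset (E₁ ⊕ E₂),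
      FullRankFeasible Γ₁ Γ₂ F₁ → FullRankFeasible Γ₁ Γ₂ F₂ → F₂.card < F₁.card →
      ∃ x ∈ F₁ \ F₂, FullRankFeasible Γ₁ Γ₂ (insert x F₂)) := by
  have hL0 : (sumPartL (∅ : Finset (E₁ ⊕ E₂))) = ∅ := by ext x; simp [sumPartL]
  have hR0 : (sumPartR (∅ : Finset (E₁ ⊕ E₂))) = ∅ := by ext x; simp [sumPartR]
  constructor
  · left; rw [hL0, hR0]; exact ⟨Γ₁.empty_mem, rfl⟩
  intro F₁ F₂ h₁ h₂ hlt
  have hL₁ : sumPartL F₁ ∈ Γ₁.feasible := by rcases h₁ with ⟨h, _⟩ | ⟨h, _⟩ <;> exact h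
  have hL₂ : sumPartL F₂ ∈ Γ₁.feasible := by rcases h₂ with ⟨h, _⟩ | ⟨h, _⟩ <;> exact h
  have hc₁ := card_eq F₁
  have hc₂ := card_eq F₂
  have memL : ∀ (F : Finset (E₁ ⊕ E₂)) (x : E₁), x ∈ sumPartL F ↔ Sum.inl x ∈ F := by
    intro F x; simp [sumPartL]
  have memR : ∀ (F : Finset (E₁ ⊕ E₂)) (y : E₂), y ∈ sumPartR F ↔ Sum.inr y ∈ F := by
    intro F y; simp [sumPartR]
  have insL : ∀ (F : Finset (E₁ ⊕ E₂)) (x : E₁),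
      sumPartL (insert (Sum.inl x) F) = insert x (sumPartL F) ∧
      sumPartR (insert (Sum.inl x) F) = sumPartR F := by
    intro F x
    constructor <;> [ext z; ext z] <;> simp [sumPartL, sumPartR]
  have insR : ∀ (F : Finset (E₁ ⊕ E₂)) (y : E₂),
      sumPartL (insert (Sum.inr y) F) = sumPartL F ∧
      sumPartR (insert (Sum.inr y) F) = insert y (sumPartR F) := by
    intro F y
    constructor <;> [ext z; ext z] <;> simp [sumPartL, sumPartR]
  rcases h₂ with ⟨hL₂', hR₂⟩ | ⟨hL₂', hfull₂, hR₂⟩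
  · -- R₂ = ∅
    by_cases hcmp : (sumPartL F₂).card < (sumPartL F₁).card
    · obtain ⟨x, hx, hins⟩ := Γ₁.exchange _ hL₁ _ hL₂ hcmp
      rw [Finset.mem_sdiff] at hx
      refine ⟨Sum.inl x, Finset.mem_sdiff.mpr ⟨(memL F₁ x).mp hx.1,
        fun h => hx.2 ((memL F₂ x).mpr h)⟩, ?_⟩
      left
      rw [(insL F₂ x).1, (insL F₂ x).2, hR₂]
      exact ⟨hins, rfl⟩
    · push_neg at hcmp
      have hR₁pos : 0 < (sumPartR F₁).card := by
        rw [hR₂] at hc₂; simp at hc₂; omega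
      rcases h₁ with ⟨_, hR₁⟩ | ⟨_, hfull₁, hR₁⟩
      · rw [hR₁] at hR₁pos; simp at hR₁pos
      -- L₁ full rank, so |L₂| = rank univ, so L₂ full rank
      have h1 : Γ₁.rank (sumPartL F₁) = (sumPartL F₁).card := Γ₁.rank_feasible hL₁
      have h2 : Γ₁.rank (sumPartL F₂) = (sumPartL F₂).card := Γ₁.rank_feasible hL₂
      have h3 : (sumPartL F₂).card ≤ Γ₁.rank Finset.univ := Γ₁.card_le_rank_univ hL₂
      have hfull₂ : Γ₁.rank (sumPartL F₂) = Γ₁.rank Finset.univ := by omega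
      obtain ⟨y, hy, hins⟩ := Γ₂.exchange _ hR₁ _ Γ₂.empty_mem (by simpa using hR₁pos)
      rw [Finset.mem_sdiff] at hy
      refine ⟨Sum.inr y, Finset.mem_sdiff.mpr ⟨(memR F₁ y).mp hy.1, fun h => by
        have := (memR F₂ y).mpr h; rw [hR₂] at this; simp at this⟩, ?_⟩
      right
      rw [(insR F₂ y).1, (insR F₂ y).2, hR₂]
      exact ⟨hL₂, hfull₂, hins⟩
  · -- L₂ full rank, R₂ ∈ 𝓕₂
    have h2 : Γ₁.rank (sumPartL F₂) = (sumPartL F₂).card := Γ₁.rank_feasible hL₂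
    have h3 : (sumPartL F₁).card ≤ Γ₁.rank Finset.univ := Γ₁.card_le_rank_univ hL₁
    have hLle : (sumPartL F₁).card ≤ (sumPartL F₂).card := by omega
    have hRlt : (sumPartR F₂).card < (sumPartR F₁).card := by omega
    rcases h₁ with ⟨_, hR₁⟩ | ⟨_, hfull₁, hR₁⟩
    · rw [hR₁] at hRlt; simp at hRlt
    obtain ⟨y, hy, hins⟩ := Γ₂.exchange _ hR₁ _ hR₂ hRlt
    rw [Finset.mem_sdiff] at hy
    refine ⟨Sum.inr y, Finset.mem_sdiff.mpr ⟨(memR F₁ y).mp hy.1,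
      fun h => hy.2 ((memR F₂ y).mpr h)⟩, ?_⟩
    right
    rw [(insR F₂ y).1, (insR F₂ y).2]
    exact ⟨hL₂, hfull₂, hins⟩
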